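/- If S ~ Gamma(m,1) with integer m ≥ 1 is independent of a nonnegative random variable I, then the ergodic rate satisfies E[ln(1 + S/(I+c))] = ∫₀^∞ (1/z)·(1 − (1+z)^{-m})·e^{-cz}·E[e^{-zI}] dz for any constant c ≥ 0. -/

import Mathlib

/-!
Frullani's integral gives `log (1 + s / y) = ∫₀^∞ (e^{-zy} - e^{-z(s+y)}) / z dz` for `s ≥ 0`,
`y > 0`. The integrand is nonnegative, so taking expectations and swapping the integrals by
Tonelli (for lower Lebesgue integrals, hence without any integrability assumption on the
logarithm) gives `E[log (1 + X / Y)] = ∫₀^∞ (M_Y(-z) - M_{X+Y}(-z)) / z dz` in terms of moment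
generating functions. For `X = S`, `Y = I + c`, independence factors `M_{S+Y} = M_S M_Y`, the
`Gamma(m, 1)` law gives `M_S(-z) = (1 + z)^{-m}`, and `M_{I+c}(-z) = e^{-cz} M_I(-z)`.
-/

open MeasureTheory ProbabilityTheory Real Set

lemma mgf_id_gammaMeasure {a r t : ℝ} (ha : 0 < a) (hr : 0 < r) (ht : t < r) :
    mgf id (gammaMeasure a r) t = (r / (r - t)) ^ a := by
  have hrt : 0 < r - t := sub_pos.2 ht
  rw [mgf, gammaMeasure, integral_withDensity_eq_integral_toReal_smul (f := gammaPDF a r)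
    (measurable_gammaPDFReal a r).ennreal_ofReal (ae_of_all _ fun _ ↦ ENNReal.ofReal_lt_top)]
  simp only [gammaPDF, ENNReal.toReal_ofReal (gammaPDFReal_nonneg ha hr _), smul_eq_mul, id]
  rw [← setIntegral_eq_integral_of_forall_compl_eq_zero (s := Ici 0)
      fun x (hx : ¬0 ≤ x) ↦ by rw [gammaPDFReal, if_neg hx, zero_mul], integral_Ici_eq_integral_Ioi]
  calc ∫ x in Ioi 0, gammaPDFReal a r x * exp (t * x)
      = ∫ x in Ioi 0, r ^ a / Gamma a * (x ^ (a - 1) * exp (-((r - t) * x))) :=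
        setIntegral_congr_fun measurableSet_Ioi fun x (hx : 0 < x) ↦ by
          rw [gammaPDFReal, if_pos hx.le, mul_assoc, ← exp_add]; ring_nf
    _ = (r / (r - t)) ^ a := by
        rw [integral_const_mul, integral_rpow_mul_exp_neg_mul_Ioi ha hrt,
          div_rpow hr.le hrt.le, one_div, inv_rpow hrt.le]
        field_simp [(Gamma_pos_of_pos ha).ne']

lemma ae_nonneg_gammaMeasure (a r : ℝ) : ∀ᵐ x ∂gammaMeasure a r, 0 ≤ x := by
  rw [ae_iff, gammaMeasure, withDensity_apply _ (by measurability)]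
  simpa [not_le, ← Iio_def] using lintegral_gammaPDF_of_nonpos le_rfl

lemma integrableOn_exp_neg_mul_sub_div {a b : ℝ} (ha : 0 < a) (hab : a ≤ b) :
    IntegrableOn (fun z ↦ (exp (-z * a) - exp (-z * b)) / z) (Ioi 0) := by
  refine Integrable.mono' ((exp_neg_integrableOn_Ioi 0 ha).const_mul (b - a))
    (Measurable.aestronglyMeasurable (by fun_prop))
    ((ae_restrict_iff' measurableSet_Ioi).2 (ae_of_all _ fun z (hz : 0 < z) ↦ ?_))
  have hgap : exp (-z * a) - exp (-z * b) = exp (-(a * z)) * (1 - exp (-((b - a) * z))) := by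
    rw [mul_sub, mul_one, ← exp_add]; ring_nf
  have hgap0 : 0 ≤ 1 - exp (-((b - a) * z)) := by
    rw [sub_nonneg, exp_le_one_iff]; nlinarith
  have hgap_le : 1 - exp (-((b - a) * z)) ≤ (b - a) * z := by
    linarith [add_one_le_exp (-((b - a) * z))]
  rw [hgap, norm_div, norm_mul, norm_of_nonneg hgap0, norm_of_nonneg (exp_pos _).le,
    norm_of_nonneg hz.le, div_le_iff₀ hz, neg_mul]
  nlinarith [mul_le_mul_of_nonneg_left hgap_le (exp_pos (-(a * z))).le]

lemma integral_Ioi_exp_neg_mul_sub_div {a b : ℝ} (ha : 0 < a) (hab : a ≤ b) :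
    ∫ z in Ioi (0 : ℝ), (exp (-z * a) - exp (-z * b)) / z = log (b / a) := by
  have hf : Continuous fun x : ℝ ↦ exp (-x) := by fun_prop
  have hfrullani := Frullani.integral_Ioi_eq (f := fun x ↦ exp (-x)) (L := 1) (R := 0)
    (hf.locallyIntegrable.locallyIntegrableOn _) ha (ha.trans_le hab)
    (by simpa using hf.continuousWithinAt.tendsto (x := 0) (s := Ioi 0))
    tendsto_exp_neg_atTop_nhds_zero
    ((integrableOn_exp_neg_mul_sub_div ha hab).congr_fun
      (fun z _ ↦ by simp only [smul_eq_mul, div_eq_inv_mul, neg_mul, mul_comm z])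
      measurableSet_Ioi)
  simp only [smul_eq_mul, sub_zero, mul_one] at hfrullani
  rw [← hfrullani]
  refine setIntegral_congr_fun measurableSet_Ioi fun z _ ↦ ?_
  simp only [div_eq_inv_mul, neg_mul, mul_comm z]

lemma lintegral_Ioi_exp_neg_mul_sub_div {a b : ℝ} (ha : 0 < a) (hab : a ≤ b) :
    ∫⁻ z in Ioi (0 : ℝ), ENNReal.ofReal ((exp (-z * a) - exp (-z * b)) / z) =
      ENNReal.ofReal (log (b / a)) := by
  rw [← integral_Ioi_exp_neg_mul_sub_div ha hab,
    ofReal_integral_eq_lintegral_ofReal (integrableOn_exp_neg_mul_sub_div ha hab)]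
  refine (ae_restrict_iff' measurableSet_Ioi).2 (ae_of_all _ fun z (hz : 0 < z) ↦ ?_)
  exact div_nonneg (sub_nonneg.2 (exp_le_exp.2 (by nlinarith))) hz.le

section LogOneAddDiv

variable {Ω : Type*} [MeasurableSpace Ω] {μ : Measure Ω} {X Y : Ω → ℝ} {z : ℝ}

lemma integrable_exp_neg_mul_of_nonneg [IsFiniteMeasure μ] (hX : AEMeasurable X μ)
    (hX0 : ∀ᵐ ω ∂μ, 0 ≤ X ω) (hz : 0 ≤ z) : Integrable (fun ω ↦ exp (-z * X ω)) μ := by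
  refine .of_mem_Icc 0 1 (measurable_exp.comp_aemeasurable (hX.const_mul _)) ?_
  filter_upwards [hX0] with ω hω
  exact ⟨(exp_pos _).le, exp_le_one_iff.2 (by nlinarith)⟩

lemma measurable_mgf [SFinite μ] (hX : Measurable X) : Measurable (mgf X μ) := by
  have h : Measurable fun p : ℝ × Ω ↦ exp (p.1 * X p.2) := by fun_prop
  exact h.stronglyMeasurable.integral_prod_right'.measurable

lemma mgf_add_neg_le_mgf_neg [IsFiniteMeasure μ] (hX : AEMeasurable X μ) (hY : AEMeasurable Y μ)
    (hX0 : ∀ᵐ ω ∂μ, 0 ≤ X ω) (hY0 : ∀ᵐ ω ∂μ, 0 ≤ Y ω) (hz : 0 ≤ z) :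
    mgf (X + Y) μ (-z) ≤ mgf Y μ (-z) := by
  have hXY0 : ∀ᵐ ω ∂μ, 0 ≤ (X + Y) ω := by
    filter_upwards [hX0, hY0] with ω hXω hYω using add_nonneg hXω hYω
  refine integral_mono_ae (integrable_exp_neg_mul_of_nonneg (hX.add hY) hXY0 hz)
    (integrable_exp_neg_mul_of_nonneg hY hY0 hz) ?_
  filter_upwards [hX0] with ω hω
  exact exp_le_exp.2 (by simp only [Pi.add_apply]; nlinarith)

lemma ofReal_mgf_neg_sub_mgf_add_neg_div_eq_lintegral [IsFiniteMeasure μ] (hX : AEMeasurable X μ)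
    (hY : AEMeasurable Y μ) (hX0 : ∀ᵐ ω ∂μ, 0 ≤ X ω) (hY0 : ∀ᵐ ω ∂μ, 0 ≤ Y ω) (hz : 0 < z) :
    ENNReal.ofReal ((mgf Y μ (-z) - mgf (X + Y) μ (-z)) / z) =
      ∫⁻ ω, ENNReal.ofReal ((exp (-z * Y ω) - exp (-z * (X ω + Y ω))) / z) ∂μ := by
  have hXY0 : ∀ᵐ ω ∂μ, 0 ≤ X ω + Y ω := by
    filter_upwards [hX0, hY0] with ω hXω hYω using add_nonneg hXω hYω
  have hYint := integrable_exp_neg_mul_of_nonneg hY hY0 hz.le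
  have hXYint : Integrable (fun ω ↦ exp (-z * (X ω + Y ω))) μ :=
    integrable_exp_neg_mul_of_nonneg (hX.add hY) hXY0 hz.le
  have hint : Integrable (fun ω ↦ (exp (-z * Y ω) - exp (-z * (X ω + Y ω))) / z) μ :=
    (hYint.sub hXYint).div_const z
  rw [← ofReal_integral_eq_lintegral_ofReal hint, integral_div, integral_sub hYint hXYint]
  · rfl
  filter_upwards [hX0] with ω hω
  exact div_nonneg (sub_nonneg.2 (exp_le_exp.2 (by nlinarith))) hz.le

lemma lintegral_ofReal_log_one_add_div_eq_lintegral_mgf [IsFiniteMeasure μ] (hX : Measurable X)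
    (hY : Measurable Y) (hX0 : ∀ᵐ ω ∂μ, 0 ≤ X ω) (hY0 : ∀ᵐ ω ∂μ, 0 < Y ω) :
    ∫⁻ ω, ENNReal.ofReal (log (1 + X ω / Y ω)) ∂μ =
      ∫⁻ z in Ioi (0 : ℝ), ENNReal.ofReal ((mgf Y μ (-z) - mgf (X + Y) μ (-z)) / z) := by
  calc ∫⁻ ω, ENNReal.ofReal (log (1 + X ω / Y ω)) ∂μ
      = ∫⁻ ω, (∫⁻ z in Ioi (0 : ℝ),
          ENNReal.ofReal ((exp (-z * Y ω) - exp (-z * (X ω + Y ω))) / z)) ∂μ := by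
        refine lintegral_congr_ae ?_
        filter_upwards [hX0, hY0] with ω hXω hYω
        rw [lintegral_Ioi_exp_neg_mul_sub_div hYω (le_add_of_nonneg_left hXω),
          one_add_div hYω.ne', add_comm]
    _ = ∫⁻ z in Ioi (0 : ℝ), ∫⁻ ω,
          ENNReal.ofReal ((exp (-z * Y ω) - exp (-z * (X ω + Y ω))) / z) ∂μ :=
        lintegral_lintegral_swap (by fun_prop)
    _ = ∫⁻ z in Ioi (0 : ℝ), ENNReal.ofReal ((mgf Y μ (-z) - mgf (X + Y) μ (-z)) / z) :=
        setLIntegral_congr_fun measurableSet_Ioi fun z hz ↦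
          (ofReal_mgf_neg_sub_mgf_add_neg_div_eq_lintegral hX.aemeasurable hY.aemeasurable hX0
            (by filter_upwards [hY0] with ω hω using hω.le) hz).symm

lemma integral_log_one_add_div_eq_integral_mgf [IsFiniteMeasure μ] (hX : Measurable X)
    (hY : Measurable Y) (hX0 : ∀ᵐ ω ∂μ, 0 ≤ X ω) (hY0 : ∀ᵐ ω ∂μ, 0 < Y ω) :
    ∫ ω, log (1 + X ω / Y ω) ∂μ =
      ∫ z in Ioi (0 : ℝ), (mgf Y μ (-z) - mgf (X + Y) μ (-z)) / z := by
  have hlog0 : 0 ≤ᵐ[μ] fun ω ↦ log (1 + X ω / Y ω) := by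
    filter_upwards [hX0, hY0] with ω hXω hYω
    exact log_nonneg (le_add_of_nonneg_right (div_nonneg hXω hYω.le))
  have hgap0 : 0 ≤ᵐ[volume.restrict (Ioi 0)]
      fun z : ℝ ↦ (mgf Y μ (-z) - mgf (X + Y) μ (-z)) / z := by
    refine (ae_restrict_iff' measurableSet_Ioi).2 (ae_of_all _ fun z (hz : 0 < z) ↦ ?_)
    refine div_nonneg (sub_nonneg.2 (mgf_add_neg_le_mgf_neg hX.aemeasurable hY.aemeasurable hX0
      ?_ hz.le)) hz.le
    filter_upwards [hY0] with ω hω using hω.le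
  have hgap : Measurable fun z : ℝ ↦ (mgf Y μ (-z) - mgf (X + Y) μ (-z)) / z :=
    (((measurable_mgf hY).comp measurable_neg).sub
      ((measurable_mgf (hX.add hY)).comp measurable_neg)).div measurable_id
  rw [integral_eq_lintegral_of_nonneg_ae hlog0
    (measurable_const.add (hX.div hY)).log.aestronglyMeasurable,
    integral_eq_lintegral_of_nonneg_ae hgap0 hgap.aestronglyMeasurable,
    lintegral_ofReal_log_one_add_div_eq_lintegral_mgf hX hY hX0 hY0]

end LogOneAddDiv

theorem ergodic_rate_gamma_signal_general
    {Ω : Type*} [MeasureSpace Ω] [IsProbabilityMeasure (ℙ : Measure Ω)]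
    (S I : Ω → ℝ) (hSmeas : Measurable S) (hImeas : Measurable I)
    (m : ℕ) (hm : 1 ≤ m)
    (hS : Measure.map S ℙ = gammaMeasure m 1)
    (hindep : IndepFun S I ℙ)
    (c : ℝ)
    (hden : ∀ ω, 0 < I ω + c) :
    ∫ ω, Real.log (1 + S ω / (I ω + c)) ∂ℙ =
      ∫ z in Set.Ioi (0 : ℝ),
        (1 / z) * (1 - (1 + z) ^ (-(m : ℝ))) * Real.exp (-c * z) *
          ∫ ω, Real.exp (-z * I ω) ∂ℙ := by
  have hS0 : ∀ᵐ ω, 0 ≤ S ω := ae_of_ae_map hSmeas.aemeasurable (hS ▸ ae_nonneg_gammaMeasure _ _)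
  have hSI : IndepFun S (fun ω ↦ I ω + c) := hindep.comp measurable_id (measurable_add_const c)
  rw [integral_log_one_add_div_eq_integral_mgf hSmeas (hImeas.add_const c) hS0 (ae_of_all _ hden)]
  refine setIntegral_congr_fun measurableSet_Ioi fun z (hz : 0 < z) ↦ ?_
  have hlaplace : mgf S ℙ (-z) = (1 + z) ^ (-(m : ℝ)) := by
    rw [← mgf_id_map hSmeas.aemeasurable, hS, mgf_id_gammaMeasure (by positivity) one_pos
      (by linarith), sub_neg_eq_add, one_div, inv_rpow (by positivity), rpow_neg (by positivity)]
  rw [hSI.mgf_add' hSmeas.aestronglyMeasurable (hImeas.add_const c).aestronglyMeasurable,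
    mgf_add_const, hlaplace, mgf]
  field_simp

/-- Ergodic rate with a `Gamma(m,1)` signal power `S` independent of the
interference `I` and noise `c ≥ 0`:
`E[ln(1 + S/(I+c))] = ∫₀^∞ (1/z)(1 − (1+z)^{-m}) e^{-cz} E[e^{-zI}] dz`. -/
theorem ergodic_rate_gamma_signal
    {Ω : Type*} [MeasureSpace Ω] [IsProbabilityMeasure (ℙ : Measure Ω)]
    (S I : Ω → ℝ) (hSmeas : Measurable S) (hImeas : Measurable I)
    (m : ℕ) (hm : 1 ≤ m)
    (hS : Measure.map S ℙ = gammaMeasure m 1)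
    (hindep : IndepFun S I ℙ)
    (hIpos : ∀ ω, 0 ≤ I ω)
    (c : ℝ) (hc : 0 ≤ c)
    (hden : ∀ ω, 0 < I ω + c) :
    ∫ ω, Real.log (1 + S ω / (I ω + c)) ∂ℙ =
      ∫ z in Set.Ioi (0 : ℝ),
        (1 / z) * (1 - (1 + z) ^ (-(m : ℝ))) * Real.exp (-c * z) *
          ∫ ω, Real.exp (-z * I ω) ∂ℙ :=
  ergodic_rate_gamma_signal_general S I hSmeas hImeas m hm hS hindep c hden
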